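/- arXiv:1504.04529 — 5 statements merged into one kernel-verified Lean document; each statement's English description precedes it below -/
import Mathlib

section
/- Let K be a field of characteristic zero and (Q, ≼) a finite poset. Then the dimension of the relation space R_Q equals 4·int(Q) − 3·#Q, where #Q is the cardinality of Q. -/
open scoped Classical

/-- The minimum of two comparable elements of a poset. -/
noncomputable def pmin {Q : Type*} [PartialOrder Q] (a b : Q) : Q :=
  if a ≤ b then a else b

/-- The standard basis vector `e(a,i,b)` of `V = (Q × {1,2} × Q) → K`, corresponding to
the syntax tree `⋆_a ∘_i ⋆_b` (position `0 : Fin 2` encodes `∘₁`, `1 : Fin 2` encodes `∘₂`). -/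
noncomputable def e (K : Type*) [Field K] {Q : Type*} (a : Q) (i : Fin 2) (b : Q) :
    (Q × Fin 2 × Q) → K :=
  fun p => if p = (a, i, b) then 1 else 0

/-- The space of relations `R_Q` of the operad `As(Q)`. -/
noncomputable def relSpace (K : Type*) [Field K] (Q : Type*) [PartialOrder Q] :
    Submodule K ((Q × Fin 2 × Q) → K) :=
  Submodule.span K
    {x | ∃ a b : Q, (a ≤ b ∨ b ≤ a) ∧
      (x = e K a 0 b - e K (pmin a b) 1 (pmin a b) ∨
       x = e K (pmin a b) 0 (pmin a b) - e K a 1 b)}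

/-! ### Auxiliary material -/

/-- Off-diagonal comparable pairs. -/
def OffD (Q : Type*) [PartialOrder Q] : Type _ :=
  {p : Q × Q // (p.1 ≤ p.2 ∨ p.2 ≤ p.1) ∧ p.1 ≠ p.2}

noncomputable instance (Q : Type*) [PartialOrder Q] [Fintype Q] : Fintype (OffD Q) := by
  unfold OffD; infer_instance

/-- The spanning family of `relSpace`. -/
noncomputable def fvec (K : Type*) [Field K] (Q : Type*) [PartialOrder Q] :
    (OffD Q ⊕ OffD Q ⊕ Q) → ((Q × Fin 2 × Q) → K) := fun i =>
  match i with
  | Sum.inl o => e K o.1.1 0 o.1.2 - e K (pmin o.1.1 o.1.2) 1 (pmin o.1.1 o.1.2)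
  | Sum.inr (Sum.inl o) => e K (pmin o.1.1 o.1.2) 0 (pmin o.1.1 o.1.2) - e K o.1.1 1 o.1.2
  | Sum.inr (Sum.inr a) => e K a 0 a - e K a 1 a

lemma pmin_self {Q : Type*} [PartialOrder Q] (a : Q) : pmin a a = a := by simp [pmin]

lemma range_fvec (K : Type*) [Field K] (Q : Type*) [PartialOrder Q] :
    Set.range (fvec K Q) =
      {x | ∃ a b : Q, (a ≤ b ∨ b ≤ a) ∧
        (x = e K a 0 b - e K (pmin a b) 1 (pmin a b) ∨
         x = e K (pmin a b) 0 (pmin a b) - e K a 1 b)} := by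
  ext x
  constructor
  · rintro ⟨i, rfl⟩
    match i with
    | Sum.inl o => exact ⟨o.1.1, o.1.2, o.2.1, Or.inl rfl⟩
    | Sum.inr (Sum.inl o) => exact ⟨o.1.1, o.1.2, o.2.1, Or.inr rfl⟩
    | Sum.inr (Sum.inr a) =>
        exact ⟨a, a, Or.inl le_rfl, Or.inl (by simp [fvec, pmin_self])⟩
  · rintro ⟨a, b, hab, h | h⟩
    · by_cases hne : a = b
      · subst hne
        exact ⟨Sum.inr (Sum.inr a), by rw [h]; simp [fvec, pmin_self]⟩
      · exact ⟨Sum.inl ⟨(a, b), hab, hne⟩, h.symm⟩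
    · by_cases hne : a = b
      · subst hne
        exact ⟨Sum.inr (Sum.inr a), by rw [h]; simp [fvec, pmin_self]⟩
      · exact ⟨Sum.inr (Sum.inl ⟨(a, b), hab, hne⟩), h.symm⟩

lemma e_apply (K : Type*) [Field K] {Q : Type*} (a x : Q) (i j : Fin 2) (b y : Q) :
    e K a i b (x, j, y) = if x = a ∧ j = i ∧ y = b then 1 else 0 := by
  simp [e, Prod.ext_iff]

lemma fvec_indep (K : Type*) [Field K] (Q : Type*) [PartialOrder Q] [Fintype Q] :
    LinearIndependent K (fvec K Q) := by
  rw [Fintype.linearIndependent_iff]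
  intro g hg
  have hev : ∀ p : Q × Fin 2 × Q, ∑ i, g i * fvec K Q i p = 0 := by
    intro p
    have h := congrFun hg p
    simpa [Finset.sum_apply] using h
  have h01 : ((0 : Fin 2) = 1) = False := by simp
  have h10 : ((1 : Fin 2) = 0) = False := by simp
  -- step 1 : coefficients of the `inl` part vanish
  have h1 : ∀ o : OffD Q, g (Sum.inl o) = 0 := by
    intro o
    obtain ⟨-, hne⟩ := o.2
    have h := hev (o.1.1, 0, o.1.2)
    rw [Fintype.sum_sum_type, Fintype.sum_sum_type] at h
    have e2 : ∑ o' : OffD Q, g (Sum.inr (Sum.inl o')) *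
        fvec K Q (Sum.inr (Sum.inl o')) (o.1.1, 0, o.1.2) = 0 := by
      apply Finset.sum_eq_zero
      intro o' _
      have hz : fvec K Q (Sum.inr (Sum.inl o')) (o.1.1, 0, o.1.2) = 0 := by
        simp only [fvec, Pi.sub_apply, e_apply]
        rw [if_neg (fun hc => hne (hc.1.trans hc.2.2.symm)),
          if_neg (fun hc => (h01 ▸ hc.2.1 : False))]
        simp
      rw [hz, mul_zero]
    have e3 : ∑ a : Q, g (Sum.inr (Sum.inr a)) *
        fvec K Q (Sum.inr (Sum.inr a)) (o.1.1, 0, o.1.2) = 0 := by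
      apply Finset.sum_eq_zero
      intro c _
      have hz : fvec K Q (Sum.inr (Sum.inr c)) (o.1.1, 0, o.1.2) = 0 := by
        simp only [fvec, Pi.sub_apply, e_apply]
        rw [if_neg (fun hc => hne (hc.1.trans hc.2.2.symm)),
          if_neg (fun hc => (h01 ▸ hc.2.1 : False))]
        simp
      rw [hz, mul_zero]
    have e1 : ∑ o' : OffD Q, g (Sum.inl o') *
        fvec K Q (Sum.inl o') (o.1.1, 0, o.1.2) = g (Sum.inl o) := by
      rw [Finset.sum_eq_single o]
      · simp only [fvec, Pi.sub_apply, e_apply]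
        rw [if_pos (by simp), if_neg (fun hc => (h01 ▸ hc.2.1 : False))]
        ring
      · intro o' _ hno
        have hz : fvec K Q (Sum.inl o') (o.1.1, 0, o.1.2) = 0 := by
          simp only [fvec, Pi.sub_apply, e_apply]
          rw [if_neg (fun hc => hno (Subtype.ext (Prod.ext hc.1.symm hc.2.2.symm))),
            if_neg (fun hc => (h01 ▸ hc.2.1 : False))]
          simp
        rw [hz, mul_zero]
      · intro hh; exact absurd (Finset.mem_univ o) hh
    rw [e1, e2, e3] at h
    simpa using h
  -- step 2 : coefficients of the `inr inl` part vanish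
  have h2 : ∀ o : OffD Q, g (Sum.inr (Sum.inl o)) = 0 := by
    intro o
    obtain ⟨-, hne⟩ := o.2
    have h := hev (o.1.1, 1, o.1.2)
    rw [Fintype.sum_sum_type, Fintype.sum_sum_type] at h
    have e1 : ∑ o' : OffD Q, g (Sum.inl o') *
        fvec K Q (Sum.inl o') (o.1.1, 1, o.1.2) = 0 := by
      apply Finset.sum_eq_zero
      intro o' _
      have hz : fvec K Q (Sum.inl o') (o.1.1, 1, o.1.2) = 0 := by
        simp only [fvec, Pi.sub_apply, e_apply]
        rw [if_neg (fun hc => (h10 ▸ hc.2.1 : False)),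
          if_neg (fun hc => hne (hc.1.trans hc.2.2.symm))]
        simp
      rw [hz, mul_zero]
    have e3 : ∑ a : Q, g (Sum.inr (Sum.inr a)) *
        fvec K Q (Sum.inr (Sum.inr a)) (o.1.1, 1, o.1.2) = 0 := by
      apply Finset.sum_eq_zero
      intro c _
      have hz : fvec K Q (Sum.inr (Sum.inr c)) (o.1.1, 1, o.1.2) = 0 := by
        simp only [fvec, Pi.sub_apply, e_apply]
        rw [if_neg (fun hc => (h10 ▸ hc.2.1 : False)),
          if_neg (fun hc => hne (hc.1.trans hc.2.2.symm))]
        simp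
      rw [hz, mul_zero]
    have e2 : ∑ o' : OffD Q, g (Sum.inr (Sum.inl o')) *
        fvec K Q (Sum.inr (Sum.inl o')) (o.1.1, 1, o.1.2) = -g (Sum.inr (Sum.inl o)) := by
      rw [Finset.sum_eq_single o]
      · simp only [fvec, Pi.sub_apply, e_apply]
        rw [if_neg (fun hc => (h10 ▸ hc.2.1 : False)), if_pos (by simp)]
        ring
      · intro o' _ hno
        have hz : fvec K Q (Sum.inr (Sum.inl o')) (o.1.1, 1, o.1.2) = 0 := by
          simp only [fvec, Pi.sub_apply, e_apply]
          rw [if_neg (fun hc => (h10 ▸ hc.2.1 : False)),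
            if_neg (fun hc => hno (Subtype.ext (Prod.ext hc.1.symm hc.2.2.symm)))]
          simp
        rw [hz, mul_zero]
      · intro hh; exact absurd (Finset.mem_univ o) hh
    rw [e1, e2, e3] at h
    simpa using h
  -- step 3 : diagonal coefficients vanish
  have h3 : ∀ a : Q, g (Sum.inr (Sum.inr a)) = 0 := by
    intro a
    have h := hev (a, 0, a)
    rw [Fintype.sum_sum_type, Fintype.sum_sum_type] at h
    have e1 : ∑ o' : OffD Q, g (Sum.inl o') *
        fvec K Q (Sum.inl o') (a, 0, a) = 0 := by
      apply Finset.sum_eq_zero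
      intro o' _
      rw [h1 o', zero_mul]
    have e2 : ∑ o' : OffD Q, g (Sum.inr (Sum.inl o')) *
        fvec K Q (Sum.inr (Sum.inl o')) (a, 0, a) = 0 := by
      apply Finset.sum_eq_zero
      intro o' _
      rw [h2 o', zero_mul]
    have e3 : ∑ c : Q, g (Sum.inr (Sum.inr c)) *
        fvec K Q (Sum.inr (Sum.inr c)) (a, 0, a) = g (Sum.inr (Sum.inr a)) := by
      rw [Finset.sum_eq_single a]
      · simp only [fvec, Pi.sub_apply, e_apply]
        rw [if_pos (by simp), if_neg (fun hc => (h01 ▸ hc.2.1 : False))]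
        ring
      · intro c _ hnc
        have hz : fvec K Q (Sum.inr (Sum.inr c)) (a, 0, a) = 0 := by
          simp only [fvec, Pi.sub_apply, e_apply]
          rw [if_neg (fun hc => hnc hc.1.symm),
            if_neg (fun hc => (h01 ▸ hc.2.1 : False))]
          simp
        rw [hz, mul_zero]
      · intro hh; exact absurd (Finset.mem_univ a) hh
    rw [e1, e2, e3] at h
    simpa using h
  intro i
  match i with
  | Sum.inl o => exact h1 o
  | Sum.inr (Sum.inl o) => exact h2 o
  | Sum.inr (Sum.inr a) => exact h3 a

lemma card_offd (Q : Type*) [PartialOrder Q] [Fintype Q] :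
    Fintype.card (OffD Q) + 2 * Fintype.card Q =
      2 * Set.ncard {p : Q × Q | p.1 ≤ p.2} ∧
    Fintype.card Q ≤ Set.ncard {p : Q × Q | p.1 ≤ p.2} := by
  classical
  set L : Finset (Q × Q) := Finset.univ.filter (fun p => p.1 ≤ p.2) with hL
  set G : Finset (Q × Q) := Finset.univ.filter (fun p => p.2 ≤ p.1) with hG
  set D : Finset (Q × Q) := Finset.univ.filter (fun p => p.1 = p.2) with hD
  have hncard : Set.ncard {p : Q × Q | p.1 ≤ p.2} = L.card := by
    rw [Set.ncard_eq_toFinset_card']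
    congr 1
    ext p
    simp [hL]
  have hGL : G.card = L.card := by
    apply Finset.card_bij (fun p _ => Prod.swap p)
    · intro p hp
      simp only [hG, Finset.mem_filter, Finset.mem_univ, true_and] at hp
      simp [hL, hp]
    · intro p _ q _ h
      exact Prod.swap_injective h
    · intro p hp
      simp only [hL, Finset.mem_filter, Finset.mem_univ, true_and] at hp
      exact ⟨Prod.swap p, by simp [hG, hp], by simp⟩
  have hDcard : D.card = Fintype.card Q := by
    rw [Fintype.card, ← Finset.card_image_of_injective Finset.univ
      (f := fun a : Q => (a, a)) (fun a b h => (Prod.mk.injEq _ _ _ _ ▸ h).1)]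
    · congr 1
      ext p
      simp only [hD, Finset.mem_filter, Finset.mem_univ, true_and, Finset.mem_image]
      constructor
      · intro h
        exact ⟨p.1, Prod.ext rfl h⟩
      · rintro ⟨a, -, rfl⟩; rfl
  have hinter : L ∩ G = D := by
    ext p
    simp only [hL, hG, hD, Finset.mem_inter, Finset.mem_filter, Finset.mem_univ, true_and]
    exact ⟨fun ⟨h1, h2⟩ => le_antisymm h1 h2, fun h => ⟨le_of_eq h, ge_of_eq h⟩⟩
  have hcardOffD : Fintype.card (OffD Q) = ((L ∪ G) \ D).card := by
    rw [show Fintype.card (OffD Q) =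
      (Finset.univ.filter (fun p : Q × Q => (p.1 ≤ p.2 ∨ p.2 ≤ p.1) ∧ p.1 ≠ p.2)).card from
      Fintype.card_subtype _]
    congr 1
    ext p
    simp only [Finset.mem_filter, Finset.mem_univ, true_and, Finset.mem_sdiff,
      Finset.mem_union, hL, hG, hD]
  have hDL : D ⊆ L := by
    intro p hp
    simp only [hD, Finset.mem_filter, Finset.mem_univ, true_and] at hp
    simp [hL, le_of_eq hp]
  have hDsub : D ⊆ L ∪ G := hDL.trans Finset.subset_union_left
  have hunion : (L ∪ G).card + D.card = L.card + G.card := by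
    rw [← hinter]; exact Finset.card_union_add_card_inter L G
  have hsdiff : ((L ∪ G) \ D).card = (L ∪ G).card - D.card :=
    Finset.card_sdiff_of_subset hDsub
  have hDleL : D.card ≤ L.card := Finset.card_le_card hDL
  constructor
  · rw [hcardOffD, hsdiff, hncard]
    omega
  · rw [hncard]; omega

/-- The dimension of the relation space `R_Q` equals `4·int(Q) − 3·#Q`, where `int(Q)` is
the number of intervals (pairs `(a,b)` with `a ≼ b`) of the finite poset `Q`. -/
theorem finrank_relSpace {K Q : Type*} [Field K] [CharZero K]
    [Fintype Q] [PartialOrder Q] :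
    Module.finrank K (relSpace K Q) =
      4 * Set.ncard {p : Q × Q | p.1 ≤ p.2} - 3 * Fintype.card Q := by
  have hspan : relSpace K Q = Submodule.span K (Set.range (fvec K Q)) := by
    rw [relSpace, range_fvec]
  rw [hspan, finrank_span_eq_card (fvec_indep K Q)]
  rw [Fintype.card_sum, Fintype.card_sum]
  obtain ⟨h1, h2⟩ := card_offd Q
  omega
end

section
/- Let Q be a finite poset and A a Q-associative algebra over a field K. Then for every element x of A, the set E_A(x) is an order filter of Q: if x is an a-unit and a ≼ b, then x is also a b-unit. -/
/-- For a finite poset `Q` and a `Q`-associative algebra `A` over a field `K` of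
characteristic zero (a `K`-vector space with bilinear operations `⋆_a` satisfying
`(x ⋆_a y) ⋆_b z = x ⋆_a (y ⋆_b z) = (x ⋆_c y) ⋆_a z = x ⋆_c (y ⋆_a z)` whenever
`a ≼ b` and `a ≼ c`), the set `E_A(x)` of elements `a` for which `x` is an `a`-unit is an
order filter: if `x` is an `a`-unit and `a ≼ b`, then `x` is a `b`-unit. -/
theorem unit_set_is_order_filter {K Q A : Type*} [Field K] [CharZero K]
    [Fintype Q] [PartialOrder Q] [AddCommGroup A] [Module K A]
    (mul : Q → A →ₗ[K] A →ₗ[K] A)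
    (hassoc : ∀ (a b c : Q) (x y z : A), a ≤ b → a ≤ c →
      mul b (mul a x y) z = mul a x (mul b y z) ∧
      mul a x (mul b y z) = mul a (mul c x y) z ∧
      mul a (mul c x y) z = mul c x (mul a y z))
    (x : A) (a b : Q)
    (ha : ∀ y : A, mul a x y = y ∧ mul a y x = y)
    (hab : a ≤ b) :
    ∀ y : A, mul b x y = y ∧ mul b y x = y := by
  intro y
  constructor
  · -- mul a (mul b x x) y = mul b x (mul a x y) = mul b x y, and also = y
    have h1 := (hassoc a a b x x y le_rfl hab).2.1
    have h2 := (hassoc a a b x x y le_rfl hab).2.2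
    rw [(ha y).1, (ha y).1] at h1
    rw [(ha y).1] at h2
    rw [← h2, ← h1]
  · have h3 := (hassoc a a b y x x le_rfl hab).2.1
    rw [(ha x).1, (ha y).2, (ha (mul b y x)).2] at h3
    exact h3.symm
end

section
/- Let K be a field of characteristic zero and (Q, ≼) a finite poset. In the quotient of the polynomial algebra K[X_a : a ∈ Q] by the ideal I_Q generated by the elements X_a·X_b − X_a for all a ≼ b in Q, the images of the squarefree monomials ∏_{a ∈ S} X_a, where S ranges over the antichains of Q (including the empty antichain, giving the monomial 1), form a K-vector space basis. -/
/-!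
For an upper set `U`, evaluation at the indicator function of `U` kills `I_Q`, and it sends
`∏_{a ∈ S} X_a` to `1` if `S ⊆ U` and to `0` otherwise. The relations `X_a X_b ≡ X_a` for `a ≤ b`
(in particular `X_a² ≡ X_a`) reduce every monomial to one over an antichain, so these span.
An antichain is the set of minimal elements of its upper closure, so in a nontrivial relation
we may pick an antichain `T` with nonzero coefficient whose upper closure is minimal; evaluating
at the indicator of that upper closure leaves only the coefficient of `T`.
-/

open scoped Classical

/-- The ideal `I_Q` of `K[X_a : a ∈ Q]` generated by the elements `X_a·X_b − X_a` for all
`a ≼ b` in `Q`. -/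
noncomputable def antichainIdeal (K : Type*) [Field K] (Q : Type*) [PartialOrder Q] :
    Ideal (MvPolynomial Q K) :=
  Ideal.span {p | ∃ a b : Q, a ≤ b ∧
    p = MvPolynomial.X a * MvPolynomial.X b - MvPolynomial.X a}

open MvPolynomial

theorem IsAntichain.eq_of_upperClosure_eq {α : Type*} [PartialOrder α] {s t : Set α}
    (hs : IsAntichain (· ≤ ·) s) (ht : IsAntichain (· ≤ ·) t)
    (h : upperClosure s = upperClosure t) : s = t := by
  ext x
  rw [← hs.minimal_mem_upperClosure_iff_mem, ← ht.minimal_mem_upperClosure_iff_mem, h]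

theorem aeval_indicator_prod_X {R σ : Type*} [CommSemiring R] (U : Set σ) (S : Finset σ) :
    aeval (U.indicator (1 : σ → R)) (∏ a ∈ S, X a : MvPolynomial σ R) =
      if (S : Set σ) ⊆ U then 1 else 0 := by
  simp [Set.indicator_apply, Finset.prod_boole, Set.subset_def]

namespace antichainIdeal

variable {K Q : Type*} [Field K] [PartialOrder Q]

noncomputable abbrev squarefreeMonomial (S : Finset Q) : MvPolynomial Q K ⧸ antichainIdeal K Q :=
  Ideal.Quotient.mk _ (∏ a ∈ S, X a)

theorem mk_X_mul_X_of_le {a b : Q} (h : a ≤ b) :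
    Ideal.Quotient.mk (antichainIdeal K Q) (X a * X b) = Ideal.Quotient.mk _ (X a) :=
  Ideal.Quotient.eq.2 (Ideal.subset_span ⟨a, b, h, rfl⟩)

theorem isIdempotentElem_mk_X (a : Q) :
    IsIdempotentElem (Ideal.Quotient.mk (antichainIdeal K Q) (X a)) := by
  rw [IsIdempotentElem, ← map_mul, mk_X_mul_X_of_le le_rfl]

theorem mk_monomial_one (d : Q →₀ ℕ) :
    Ideal.Quotient.mk (antichainIdeal K Q) (monomial d 1) = squarefreeMonomial d.support := by
  rw [monomial_eq, C_1, one_mul, Finsupp.prod, map_prod, squarefreeMonomial, map_prod]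
  refine Finset.prod_congr rfl fun a ha => ?_
  rw [map_pow, (isIdempotentElem_mk_X a).pow_eq (Finsupp.mem_support_iff.1 ha)]

theorem squarefreeMonomial_mem_span (T : Finset Q) :
    (squarefreeMonomial T : MvPolynomial Q K ⧸ antichainIdeal K Q) ∈
      Submodule.span K (Set.range fun S : {S : Finset Q // IsAntichain (· ≤ ·) (S : Set Q)} =>
        squarefreeMonomial S.1) := by
  induction T using Finset.strongInduction with
  | H T ih =>
    by_cases hT : IsAntichain (· ≤ ·) (T : Set Q)
    · exact Submodule.subset_span ⟨⟨T, hT⟩, rfl⟩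
    obtain ⟨a, ha, b, hb, hne, hab⟩ : ∃ a ∈ T, ∃ b ∈ T, a ≠ b ∧ a ≤ b := by
      simpa [IsAntichain, Set.Pairwise] using hT
    have ha' : a ∈ T.erase b := Finset.mem_erase.2 ⟨hne, ha⟩
    have herase : (squarefreeMonomial T : MvPolynomial Q K ⧸ antichainIdeal K Q) =
        squarefreeMonomial (T.erase b) := by
      rw [squarefreeMonomial, squarefreeMonomial, ← Finset.mul_prod_erase T _ hb,
        ← Finset.mul_prod_erase _ _ ha', ← mul_assoc, mul_comm (X b), map_mul,
        mk_X_mul_X_of_le hab, ← map_mul]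
    rw [herase]
    exact ih _ (Finset.erase_ssubset hb)

theorem span_squarefreeMonomial_eq_top :
    Submodule.span K (Set.range fun S : {S : Finset Q // IsAntichain (· ≤ ·) (S : Set Q)} =>
      (squarefreeMonomial S.1 : MvPolynomial Q K ⧸ antichainIdeal K Q)) = ⊤ := by
  refine eq_top_iff.2 ?_
  rintro x -
  obtain ⟨p, rfl⟩ := Ideal.Quotient.mk_surjective x
  induction p using MvPolynomial.induction_on' with
  | monomial d c =>
    rw [← mul_one c, ← smul_eq_mul, ← smul_monomial, ← Ideal.Quotient.mkₐ_eq_mk K, map_smul,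
      Ideal.Quotient.mkₐ_eq_mk, mk_monomial_one]
    exact Submodule.smul_mem _ _ (squarefreeMonomial_mem_span _)
  | add p q hp hq =>
    rw [map_add]
    exact Submodule.add_mem _ hp hq

theorem le_ker_aeval_indicator (U : UpperSet Q) :
    antichainIdeal K Q ≤ RingHom.ker (aeval ((U : Set Q).indicator (1 : Q → K))) := by
  refine Ideal.span_le.2 ?_
  rintro _ ⟨a, b, hab, rfl⟩
  by_cases ha : a ∈ (U : Set Q)
  · simp [ha, U.upper hab ha]
  · simp [ha]

noncomputable def evalUpperSet (U : UpperSet Q) :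
    (MvPolynomial Q K ⧸ antichainIdeal K Q) →ₐ[K] K :=
  Ideal.Quotient.liftₐ _ (aeval ((U : Set Q).indicator 1)) fun _ hp =>
    le_ker_aeval_indicator U hp

theorem evalUpperSet_squarefreeMonomial (U : UpperSet Q) (S : Finset Q) :
    evalUpperSet U (squarefreeMonomial S : MvPolynomial Q K ⧸ antichainIdeal K Q) =
      if (S : Set Q) ⊆ U then 1 else 0 :=
  aeval_indicator_prod_X (U : Set Q) S

theorem linearIndependent_squarefreeMonomial :
    LinearIndependent K fun S : {S : Finset Q // IsAntichain (· ≤ ·) (S : Set Q)} =>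
      (squarefreeMonomial S.1 : MvPolynomial Q K ⧸ antichainIdeal K Q) := by
  rw [linearIndependent_iff']
  intro s g hsum S hS
  by_contra hgS
  obtain ⟨T, hT, hmin⟩ := (s.filter (g · ≠ 0)).exists_minimalFor
    (fun S => (upperClosure (S.1 : Set Q) : Set Q)) ⟨S, Finset.mem_filter.2 ⟨hS, hgS⟩⟩
  obtain ⟨hTs, hgT⟩ := Finset.mem_filter.1 hT
  have heval := congrArg (evalUpperSet (upperClosure (T.1 : Set Q))) hsum
  simp only [map_sum, map_smul, evalUpperSet_squarefreeMonomial, smul_eq_mul, map_zero] at heval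
  rw [Finset.sum_eq_single_of_mem T hTs, if_pos subset_upperClosure, mul_one] at heval
  · exact hgT heval
  intro S' hS's hS'T
  by_cases hgS' : g S' = 0
  · rw [hgS', zero_mul]
  rw [if_neg, mul_zero]
  intro hsub
  have hle := upperClosure_min hsub (upperClosure (T.1 : Set Q)).upper
  have hge := hmin (Finset.mem_filter.2 ⟨hS's, hgS'⟩) hle
  refine hS'T (Subtype.ext ?_)
  exact_mod_cast S'.2.eq_of_upperClosure_eq T.2 (SetLike.coe_injective (hle.antisymm hge))

end antichainIdeal

theorem antichain_monomials_basis_general {K Q : Type*} [Field K] [PartialOrder Q] :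
    ∃ b : Module.Basis {S : Finset Q // IsAntichain (· ≤ ·) (S : Set Q)} K
        (MvPolynomial Q K ⧸ antichainIdeal K Q),
      ∀ S : {S : Finset Q // IsAntichain (· ≤ ·) (S : Set Q)},
        b S = Ideal.Quotient.mk (antichainIdeal K Q) (∏ a ∈ S.1, MvPolynomial.X a) :=
  ⟨.mk antichainIdeal.linearIndependent_squarefreeMonomial
      antichainIdeal.span_squarefreeMonomial_eq_top.ge,
    Module.Basis.mk_apply _ _⟩

/-- In the quotient `K[X_a : a ∈ Q] ⧸ I_Q`, the images of the squarefree monomials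
`∏_{a ∈ S} X_a`, for `S` ranging over the antichains of `Q` (including the empty
antichain, giving `1`), form a `K`-vector space basis. -/
theorem antichain_monomials_basis {K Q : Type*} [Field K] [CharZero K]
    [Fintype Q] [PartialOrder Q] :
    ∃ b : Module.Basis {S : Finset Q // IsAntichain (· ≤ ·) (S : Set Q)} K
        (MvPolynomial Q K ⧸ antichainIdeal K Q),
      ∀ S : {S : Finset Q // IsAntichain (· ≤ ·) (S : Set Q)},
        b S = Ideal.Quotient.mk (antichainIdeal K Q) (∏ a ∈ S.1, MvPolynomial.X a) :=
  antichain_monomials_basis_general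
end

section
/- Let Q be a finite poset. Then the rewrite relation →_Q on syntax trees on Q is terminating: there is no infinite sequence of one-step rewritings (equivalently, the converse of the one-step rewrite relation is well-founded). -/
open scoped Classical

/-- Syntax trees on `Q`: planar binary trees whose internal nodes are labeled by
elements of `Q`. -/
inductive STree (Q : Type*) where
  | leaf : STree Q
  | node : Q → STree Q → STree Q → STree Q

/-- The one-step rewrite relation `→_Q` on syntax trees: the closure under contexts of
the two rules, for comparable `a, b` with `m := a↑b`:
(1) `a(b(t₁,t₂),t₃) → m(t₁,m(t₂,t₃))`; (2) for `a ≠ b`, `a(t₁,b(t₂,t₃)) → m(t₁,m(t₂,t₃))`. -/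
inductive Rew {Q : Type*} [PartialOrder Q] : STree Q → STree Q → Prop
  | rule1 (a b : Q) (h : a ≤ b ∨ b ≤ a) (t1 t2 t3 : STree Q) :
      Rew (.node a (.node b t1 t2) t3)
        (.node (pmin a b) t1 (.node (pmin a b) t2 t3))
  | rule2 (a b : Q) (h : a ≤ b ∨ b ≤ a) (hne : a ≠ b) (t1 t2 t3 : STree Q) :
      Rew (.node a t1 (.node b t2 t3))
        (.node (pmin a b) t1 (.node (pmin a b) t2 t3))
  | left (a : Q) {t t' : STree Q} (s : STree Q) :
      Rew t t' → Rew (.node a t s) (.node a t' s)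
  | right (a : Q) (s : STree Q) {t t' : STree Q} :
      Rew t t' → Rew (.node a s t) (.node a s t')

namespace RewTermAux

variable {Q : Type*} [Fintype Q] [PartialOrder Q]

/-- Rank of an element: number of elements below or equal to it. -/
noncomputable def rk (a : Q) : ℕ := (Finset.univ.filter (· ≤ a)).card

lemma rk_mono {a b : Q} (h : a ≤ b) : rk a ≤ rk b := by
  apply Finset.card_le_card
  intro x hx
  simp only [Finset.mem_filter, Finset.mem_univ, true_and] at *
  exact hx.trans h

lemma rk_strict {a b : Q} (h : a < b) : rk a < rk b := by
  apply Finset.card_lt_card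
  constructor
  · intro x hx
    simp only [Finset.mem_filter, Finset.mem_univ, true_and] at *
    exact hx.trans h.le
  · intro hsub
    have := hsub (by simp : b ∈ Finset.univ.filter (· ≤ b))
    simp only [Finset.mem_filter, Finset.mem_univ, true_and] at this
    exact absurd (le_antisymm this h.le) (ne_of_gt h)

lemma pmin_le_left {a b : Q} (h : a ≤ b ∨ b ≤ a) : pmin a b ≤ a := by
  unfold pmin; split_ifs with hab
  · exact le_rfl
  · exact h.resolve_left hab

lemma pmin_le_right {a b : Q} (h : a ≤ b ∨ b ≤ a) : pmin a b ≤ b := by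
  unfold pmin; split_ifs with hab
  · exact hab
  · exact le_rfl

lemma rk_pmin_lt {a b : Q} (h : a ≤ b ∨ b ≤ a) (hne : a ≠ b) :
    rk (pmin a b) + rk (pmin a b) < rk a + rk b := by
  unfold pmin; split_ifs with hab
  · have := rk_strict (lt_of_le_of_ne hab hne)
    omega
  · have hba : b ≤ a := h.resolve_left hab
    have := rk_strict (lt_of_le_of_ne hba (Ne.symm hne))
    omega

/-- Sum of ranks of labels. -/
noncomputable def lab : STree Q → ℕ
  | .leaf => 0
  | .node a l r => rk a + lab l + lab r

/-- Number of internal nodes. -/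
def sz : STree Q → ℕ
  | .leaf => 0
  | .node _ l r => sz l + sz r + 1

/-- Left-weight: sum over internal nodes of the size of the left subtree. -/
def lw : STree Q → ℕ
  | .leaf => 0
  | .node _ l r => lw l + lw r + sz l

lemma sz_eq {t t' : STree Q} (h : Rew t t') : sz t' = sz t := by
  induction h with
  | rule1 a b hc t1 t2 t3 => first | rfl | (simp only [sz]; omega)
  | rule2 a b hc hne t1 t2 t3 => first | rfl | (simp only [sz]; omega)
  | left a s _ ih => first | rfl | (simp only [sz]; omega)
  | right a s _ ih => first | rfl | (simp only [sz]; omega)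

lemma key {t t' : STree Q} (h : Rew t t') :
    lab t' ≤ lab t ∧ (lab t' < lab t ∨ lw t' < lw t) := by
  induction h with
  | rule1 a b hc t1 t2 t3 =>
    have h1 := rk_mono (pmin_le_left hc)
    have h2 := rk_mono (pmin_le_right hc)
    simp only [lab, lw, sz]
    constructor
    · omega
    · by_cases hne : a = b
      · right; omega
      · left
        have := rk_pmin_lt hc hne
        omega
  | rule2 a b hc hne t1 t2 t3 =>
    have := rk_pmin_lt hc hne
    simp only [lab]
    omega
  | left a s hr ih =>
    have hs := sz_eq hr
    simp only [lab, lw]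
    omega
  | right a s _ ih =>
    simp only [lab, lw]
    omega

end RewTermAux

/-- The rewrite relation `→_Q` on syntax trees on a finite poset `Q` is terminating: the
converse of the one-step rewrite relation is well-founded. -/
theorem rew_terminating {Q : Type*} [Fintype Q] [PartialOrder Q] :
    WellFounded (fun t' t : STree Q => Rew t t') := by
  have hwf : WellFounded (Prod.Lex (· < ·) (· < ·) : ℕ × ℕ → ℕ × ℕ → Prop) :=
    WellFounded.prod_lex (Nat.lt_wfRel.wf) (Nat.lt_wfRel.wf)
  apply Subrelation.wf (r := InvImage (Prod.Lex (· < ·) (· < ·))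
    (fun t => (RewTermAux.lab t, RewTermAux.lw t)))
  · intro t' t h
    obtain ⟨hle, hor⟩ := RewTermAux.key h
    rcases lt_or_eq_of_le hle with hlt | heq
    · exact Prod.Lex.left _ _ hlt
    · have h2 : RewTermAux.lw t' < RewTermAux.lw t := hor.resolve_left (by omega)
      show Prod.Lex (· < ·) (· < ·) (RewTermAux.lab t', RewTermAux.lw t')
        (RewTermAux.lab t, RewTermAux.lw t)
      rw [heq]
      exact Prod.Lex.right _ h2
  · exact InvImage.wf _ hwf
end

section
/- Let Q be a forest poset. Then the rewrite relation ⇝_Q on Q-Schröder trees is confluent: whenever a Q-Schröder tree t rewrites in zero or more steps to r₁ and to r₂, there exists a Q-Schröder tree t' to which both r₁ and r₂ rewrite in zero or more steps. -/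
open scoped Classical

/-- Planar rooted trees with internal nodes labeled by `Q` and an arbitrary (finite)
list of children.  `Q`-Schröder trees are those satisfying `SchWF` below. -/
inductive SchTree (Q : Type*) where
  | leaf : SchTree Q
  | node : Q → List (SchTree Q) → SchTree Q

/-- Well-formedness for `Q`-Schröder trees: every internal node has at least two
children. -/
inductive SchWF {Q : Type*} : SchTree Q → Prop
  | leaf : SchWF .leaf
  | node (a : Q) (ts : List (SchTree Q)) :
      2 ≤ ts.length → (∀ t ∈ ts, SchWF t) → SchWF (.node a ts)

/-- A tree is `Q`-alternating if whenever an internal node labeled `a` has an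
internal-node child labeled `b`, the elements `a` and `b` are incomparable in `Q`. -/
inductive Alt {Q : Type*} [PartialOrder Q] : SchTree Q → Prop
  | leaf : Alt .leaf
  | node (a : Q) (ts : List (SchTree Q)) :
      (∀ t ∈ ts, Alt t) →
      (∀ (b : Q) (cs : List (SchTree Q)), SchTree.node b cs ∈ ts → ¬ a ≤ b ∧ ¬ b ≤ a) →
      Alt (.node a ts)

/-- The one-step rewrite relation `⇝_Q`: the closure under contexts of the rule sending
an internal node labeled `b` having among its children an internal node labeled `a`,
with `a` and `b` comparable, to a single node labeled `a↑b` whose children are those of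
the `b`-node with the `a`-node spliced by its own children. -/
inductive SRew {Q : Type*} [PartialOrder Q] : SchTree Q → SchTree Q → Prop
  | rule (a b : Q) (h : a ≤ b ∨ b ≤ a) (l1 l2 cs : List (SchTree Q)) :
      SRew (.node b (l1 ++ SchTree.node a cs :: l2))
        (.node (pmin a b) (l1 ++ cs ++ l2))
  | ctx (c : Q) (l1 l2 : List (SchTree Q)) {t t' : SchTree Q} :
      SRew t t' → SRew (.node c (l1 ++ t :: l2)) (.node c (l1 ++ t' :: l2))

/-- A forest poset: for all `a b c`, if `a ≼ c` and `b ≼ c` then `a` and `b` are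
comparable. -/
def IsForestPoset (Q : Type*) [PartialOrder Q] : Prop :=
  ∀ a b c : Q, a ≤ c → b ≤ c → a ≤ b ∨ b ≤ a

section Helpers

variable {Q : Type*} [PartialOrder Q]

theorem pmin_le_right (a b : Q) : pmin a b ≤ b := by
  unfold pmin; split_ifs with h; exacts [h, le_rfl]

theorem pmin_le_left {a b : Q} (h : a ≤ b ∨ b ≤ a) : pmin a b ≤ a := by
  unfold pmin; split_ifs with h'; exacts [le_rfl, h.resolve_left h']

theorem cmp_of_le (hQ : IsForestPoset Q) {x y w : Q} (hxy : x ≤ y ∨ y ≤ x) (hwy : w ≤ y) :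
    x ≤ w ∨ w ≤ x := hxy.elim (fun h => hQ x w y h hwy) (fun h => Or.inr (hwy.trans h))

theorem pmin_assoc {x y z : Q} (h1 : x ≤ y ∨ y ≤ x) (h2 : y ≤ z ∨ z ≤ y) :
    pmin x (pmin y z) = pmin (pmin x y) z := by
  unfold pmin
  rcases h1 with h1 | h1 <;> rcases h2 with h2 | h2 <;> split_ifs <;>
    first
      | rfl
      | exact le_antisymm (by solve_by_elim [le_trans]) (by solve_by_elim [le_trans])
      | (exfalso; solve_by_elim [le_trans])

theorem pmin_comm3 (hQ : IsForestPoset Q) {a a' b : Q} (h1 : a ≤ b ∨ b ≤ a)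
    (h2 : a' ≤ b ∨ b ≤ a') : pmin a' (pmin a b) = pmin a (pmin a' b) := by
  unfold pmin
  rcases h1 with h1 | h1 <;> rcases h2 with h2 | h2
  · rcases hQ a a' b h1 h2 with h3 | h3 <;> split_ifs <;>
      first
        | rfl
        | exact le_antisymm (by solve_by_elim [le_trans]) (by solve_by_elim [le_trans])
        | (exfalso; solve_by_elim [le_trans])
  all_goals split_ifs <;>
    first
      | rfl
      | exact le_antisymm (by solve_by_elim [le_trans]) (by solve_by_elim [le_trans])
      | (exfalso; solve_by_elim [le_trans])

theorem three_way {α : Type*} : ∀ {l1 : List α} {x : α} {l2 l1' : List α} {x' : α} {l2' : List α},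
    l1 ++ x :: l2 = l1' ++ x' :: l2' →
    (l1 = l1' ∧ x = x' ∧ l2 = l2') ∨
      (∃ m, l1' = l1 ++ x :: m ∧ l2 = m ++ x' :: l2') ∨
      (∃ m, l1 = l1' ++ x' :: m ∧ l2' = m ++ x :: l2)
  | [], x, l2, [], x', l2', h => by
      simp only [List.nil_append, List.cons.injEq] at h
      exact Or.inl ⟨rfl, h.1, h.2⟩
  | [], x, l2, a :: l1', x', l2', h => by
      simp only [List.nil_append, List.cons_append, List.cons.injEq] at h
      exact Or.inr (Or.inl ⟨l1', by simp [h.1], h.2⟩)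
  | a :: l1, x, l2, [], x', l2', h => by
      simp only [List.cons_append, List.nil_append, List.cons.injEq] at h
      exact Or.inr (Or.inr ⟨l1, by simp [h.1], h.2.symm⟩)
  | a :: l1, x, l2, a' :: l1', x', l2', h => by
      simp only [List.cons_append, List.cons.injEq] at h
      obtain ⟨rfl, h⟩ := h
      rcases three_way h with ⟨rfl, rfl, rfl⟩ | ⟨m, rfl, rfl⟩ | ⟨m, rfl, rfl⟩
      · exact Or.inl ⟨rfl, rfl, rfl⟩
      · exact Or.inr (Or.inl ⟨m, rfl, rfl⟩)
      · exact Or.inr (Or.inr ⟨m, rfl, rfl⟩)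

theorem rule_vs (hQ : IsForestPoset Q) {a b : Q} (hab : a ≤ b ∨ b ≤ a)
    {l1 l2 cs : List (SchTree Q)} {v : SchTree Q}
    (h2 : SRew (SchTree.node b (l1 ++ SchTree.node a cs :: l2)) v) :
    SchTree.node (pmin a b) (l1 ++ cs ++ l2) = v ∨
      ∃ w, SRew (SchTree.node (pmin a b) (l1 ++ cs ++ l2)) w ∧ SRew v w := by
  generalize ht : SchTree.node b (l1 ++ SchTree.node a cs :: l2) = t at h2
  cases h2 with
  | rule a' b' h' l1' l2' cs' =>
      obtain ⟨rfl, hl⟩ : b = b' ∧ l1 ++ SchTree.node a cs :: l2 = l1' ++ SchTree.node a' cs' :: l2' := by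
        injection ht with h1 h2; exact ⟨h1, h2⟩
      rcases three_way hl with ⟨rfl, he, rfl⟩ | ⟨m, rfl, rfl⟩ | ⟨m, rfl, rfl⟩
      · obtain ⟨rfl, rfl⟩ : a = a' ∧ cs = cs' := by injection he with h1 h2; exact ⟨h1, h2⟩
        exact Or.inl rfl
      · refine Or.inr ⟨SchTree.node (pmin a' (pmin a b)) (l1 ++ (cs ++ (m ++ (cs' ++ l2')))), ?_, ?_⟩
        · have := SRew.rule a' (pmin a b) (cmp_of_le hQ h' (pmin_le_right a b)) (l1 ++ cs ++ m) l2' cs'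
          simpa only [List.append_assoc, List.cons_append] using this
        · rw [pmin_comm3 hQ hab h']
          have := SRew.rule a (pmin a' b) (cmp_of_le hQ hab (pmin_le_right a' b)) l1 (m ++ cs' ++ l2') cs
          simpa only [List.append_assoc, List.cons_append] using this
      · refine Or.inr ⟨SchTree.node (pmin a' (pmin a b)) (l1' ++ (cs' ++ (m ++ (cs ++ l2)))), ?_, ?_⟩
        · have := SRew.rule a' (pmin a b) (cmp_of_le hQ h' (pmin_le_right a b)) l1' (m ++ cs ++ l2) cs'
          simpa only [List.append_assoc, List.cons_append] using this
        · rw [pmin_comm3 hQ hab h']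
          have := SRew.rule a (pmin a' b) (cmp_of_le hQ hab (pmin_le_right a' b)) (l1' ++ cs' ++ m) l2 cs
          simpa only [List.append_assoc, List.cons_append] using this
  | @ctx c l1' l2' s s' hin =>
      obtain ⟨rfl, hl⟩ : b = c ∧ l1 ++ SchTree.node a cs :: l2 = l1' ++ s :: l2' := by
        injection ht with h1 h2; exact ⟨h1, h2⟩
      rcases three_way hl with ⟨rfl, he, rfl⟩ | ⟨m, rfl, rfl⟩ | ⟨m, rfl, rfl⟩
      · subst he
        generalize hs : SchTree.node a cs = s at hin
        cases hin with
        | rule a'' a2 h'' m1 m2 cs'' =>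
            obtain ⟨rfl, rfl⟩ : a = a2 ∧ cs = m1 ++ SchTree.node a'' cs'' :: m2 := by
              injection hs with h1 h2; exact ⟨h1, h2⟩
            refine Or.inr ⟨SchTree.node (pmin a'' (pmin a b)) (l1 ++ (m1 ++ (cs'' ++ (m2 ++ l2)))), ?_, ?_⟩
            · have := SRew.rule a'' (pmin a b) (cmp_of_le hQ h'' (pmin_le_left hab)) (l1 ++ m1) (m2 ++ l2) cs''
              simpa only [List.append_assoc, List.cons_append] using this
            · rw [pmin_assoc h'' hab]
              have := SRew.rule (pmin a'' a) b ((cmp_of_le hQ hab.symm (pmin_le_right a'' a)).symm) l1 l2 (m1 ++ cs'' ++ m2)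
              simpa only [List.append_assoc, List.cons_append] using this
        | @ctx c2 m1 m2 x x' hin2 =>
            obtain ⟨rfl, rfl⟩ : a = c2 ∧ cs = m1 ++ x :: m2 := by
              injection hs with h1 h2; exact ⟨h1, h2⟩
            refine Or.inr ⟨SchTree.node (pmin a b) (l1 ++ (m1 ++ (x' :: (m2 ++ l2)))), ?_, ?_⟩
            · have := SRew.ctx (pmin a b) (l1 ++ m1) (m2 ++ l2) hin2
              simpa only [List.append_assoc, List.cons_append] using this
            · have := SRew.rule a b hab l1 l2 (m1 ++ x' :: m2)
              simpa only [List.append_assoc, List.cons_append] using this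
      · refine Or.inr ⟨SchTree.node (pmin a b) (l1 ++ (cs ++ (m ++ (s' :: l2')))), ?_, ?_⟩
        · have := SRew.ctx (pmin a b) (l1 ++ cs ++ m) l2' hin
          simpa only [List.append_assoc, List.cons_append] using this
        · have := SRew.rule a b hab l1 (m ++ s' :: l2') cs
          simpa only [List.append_assoc, List.cons_append] using this
      · refine Or.inr ⟨SchTree.node (pmin a b) (l1' ++ (s' :: (m ++ (cs ++ l2)))), ?_, ?_⟩
        · have := SRew.ctx (pmin a b) l1' (m ++ cs ++ l2) hin
          simpa only [List.append_assoc, List.cons_append] using this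
        · have := SRew.rule a b hab (l1' ++ s' :: m) l2 cs
          simpa only [List.append_assoc, List.cons_append] using this

theorem diamond (hQ : IsForestPoset Q) {t u v : SchTree Q} (h1 : SRew t u) (h2 : SRew t v) :
    u = v ∨ ∃ w, SRew u w ∧ SRew v w := by
  induction h1 generalizing v with
  | rule a b h l1 l2 cs => exact rule_vs hQ h h2
  | @ctx c l1 l2 s s' hin ih =>
      generalize ht : SchTree.node c (l1 ++ s :: l2) = t0 at h2
      cases h2 with
      | rule a b hab l1' l2' cs =>
          have hc : SRew (SchTree.node b (l1' ++ SchTree.node a cs :: l2'))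
              (SchTree.node c (l1 ++ s' :: l2)) := ht ▸ SRew.ctx c l1 l2 hin
          rcases rule_vs hQ hab hc with h | ⟨w, hw1, hw2⟩
          · exact Or.inl h.symm
          · exact Or.inr ⟨w, hw2, hw1⟩
      | @ctx c2 m1 m2 x x' hin2 =>
          obtain ⟨rfl, hl⟩ : c = c2 ∧ l1 ++ s :: l2 = m1 ++ x :: m2 := by
            injection ht with h1 h2; exact ⟨h1, h2⟩
          rcases three_way hl with ⟨rfl, rfl, rfl⟩ | ⟨m, rfl, rfl⟩ | ⟨m, rfl, rfl⟩
          · rcases ih hin2 with rfl | ⟨w, hw1, hw2⟩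
            · exact Or.inl rfl
            · exact Or.inr ⟨SchTree.node c (l1 ++ w :: l2), SRew.ctx c l1 l2 hw1, SRew.ctx c l1 l2 hw2⟩
          · refine Or.inr ⟨SchTree.node c (l1 ++ (s' :: (m ++ (x' :: m2)))), ?_, ?_⟩
            · have := SRew.ctx c (l1 ++ s' :: m) m2 hin2
              simpa only [List.append_assoc, List.cons_append] using this
            · have := SRew.ctx c l1 (m ++ x' :: m2) hin
              simpa only [List.append_assoc, List.cons_append] using this
          · refine Or.inr ⟨SchTree.node c (m1 ++ (x' :: (m ++ (s' :: l2)))), ?_, ?_⟩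
            · have := SRew.ctx c m1 (m ++ s' :: l2) hin2
              simpa only [List.append_assoc, List.cons_append] using this
            · have := SRew.ctx c (m1 ++ x' :: m) l2 hin
              simpa only [List.append_assoc, List.cons_append] using this

end Helpers

/-- For a forest poset `Q`, the rewrite relation `⇝_Q` on `Q`-Schröder trees is
confluent: whenever a `Q`-Schröder tree `t` rewrites in zero or more steps to `r₁` and
to `r₂`, there is a tree `t'` to which both `r₁` and `r₂` rewrite in zero or more
steps. -/
theorem srew_confluent {Q : Type*} [Fintype Q] [PartialOrder Q]
    (hQ : IsForestPoset Q) (t r₁ r₂ : SchTree Q) (ht : SchWF t)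
    (h₁ : Relation.ReflTransGen SRew t r₁) (h₂ : Relation.ReflTransGen SRew t r₂) :
    ∃ t' : SchTree Q, Relation.ReflTransGen SRew r₁ t' ∧
      Relation.ReflTransGen SRew r₂ t' := by
  have key : ∀ x y z : SchTree Q, SRew x y → SRew x z →
      ∃ w, Relation.ReflGen SRew y w ∧ Relation.ReflTransGen SRew z w := by
    intro x y z hy hz
    rcases diamond hQ hy hz with rfl | ⟨w, hw1, hw2⟩
    · exact ⟨y, .refl, .refl⟩
    · exact ⟨w, .single hw1, .single hw2⟩
  obtain ⟨d, hd1, hd2⟩ := Relation.church_rosser key h₁ h₂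
  exact ⟨d, hd1, hd2⟩
end
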